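/- Let G be a d-regular finite simple graph with n vertices and let φ: V → ℝ satisfy (d·Id + A)φ = εφ with 0 ≤ ε < d. If for some k the random-walk matrix satisfies max_{m,j} ((A/d)^{2k})_{m,j} ≤ C/n, then ‖φ‖_{ℓ^∞} ≤ (d/(d−ε))^{2k} · (C/√n) · ‖φ‖_{ℓ²}. -/

import Mathlib

/-!
The walk matrix `N = A / d` has `φ` as an eigenvector with eigenvalue `(ε - d) / d`, so
`N ^ (2k) φ = ((d - ε) / d) ^ (2k) φ`. Each coordinate of `N ^ (2k) φ` pairs `φ` with a row of
`N ^ (2k)`, whose entries lie in `[0, C / n]`; by Cauchy–Schwarz it is at most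
`(C / √n) ‖φ‖₂`. Dividing by `((d - ε) / d) ^ (2k)` gives the bound at every vertex.
-/

open Matrix Finset

namespace Matrix

variable {m n : Type*} [Fintype n]

theorem mulVec_eq_sub_smul_of_smul_one_add_mulVec_eq [DecidableEq n] {A : Matrix n n ℝ}
    {a ε : ℝ} {v : n → ℝ} (h : (a • 1 + A) *ᵥ v = ε • v) : A *ᵥ v = (ε - a) • v := by
  rw [add_mulVec, smul_mulVec, one_mulVec] at h
  rw [sub_smul, ← h, add_sub_cancel_left]

theorem pow_mulVec_of_mulVec_eq_smul [DecidableEq n] {R : Type*} [CommSemiring R]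
    {A : Matrix n n R} {c : R} {v : n → R} (h : A *ᵥ v = c • v) (p : ℕ) :
    (A ^ p) *ᵥ v = c ^ p • v := by
  induction p with
  | zero => simp
  | succ p ih => rw [pow_succ, ← mulVec_mulVec, h, mulVec_smul, ih, smul_smul, pow_succ']

theorem abs_mulVec_apply_le_of_abs_le {M : Matrix m n ℝ} {i : m} {b : ℝ} (hb : 0 ≤ b)
    (hM : ∀ j, |M i j| ≤ b) (v : n → ℝ) :
    |(M *ᵥ v) i| ≤ b * √(Fintype.card n) * √(∑ j, v j ^ 2) := by
  have hrow : √(∑ j, M i j ^ 2) ≤ b * √(Fintype.card n) :=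
    calc √(∑ j, M i j ^ 2) ≤ √(∑ _j : n, b ^ 2) :=
          Real.sqrt_le_sqrt <| sum_le_sum fun j _ => sq_abs (M i j) ▸
            pow_le_pow_left₀ (abs_nonneg _) (hM j) 2
      _ = b * √(Fintype.card n) := by
          rw [sum_const, card_univ, nsmul_eq_mul, Real.sqrt_mul (Nat.cast_nonneg _),
            Real.sqrt_sq hb, mul_comm]
  calc |(M *ᵥ v) i| ≤ ∑ j, |M i j| * |v j| := by
        simpa only [mulVec, dotProduct, abs_mul] using abs_sum_le_sum_abs (fun j => M i j * v j) univ
    _ ≤ √(∑ j, |M i j| ^ 2) * √(∑ j, |v j| ^ 2) := Real.sum_mul_le_sqrt_mul_sqrt _ _ _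
    _ ≤ b * √(Fintype.card n) * √(∑ j, v j ^ 2) := by
        simp only [sq_abs]
        gcongr

end Matrix

theorem div_mul_sqrt_eq_div_sqrt (c x : ℝ) : c / x * √x = c / √x := by
  rw [div_mul_eq_mul_div, mul_div_assoc, Real.sqrt_div_self', mul_one_div]

theorem sup_norm_bound_from_equidistributed_walk_general
    {V : Type*} [Fintype V] [DecidableEq V]
    (G : SimpleGraph V) [DecidableRel G.Adj] (d : ℕ)
    (φ : V → ℝ) (ε : ℝ) (hε0 : 0 ≤ ε) (hεd : ε < d)
    (heig : ((d : ℝ) • (1 : Matrix V V ℝ) + G.adjMatrix ℝ) *ᵥ φ = ε • φ)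
    (k : ℕ) (C : ℝ) (hC : 0 < C)
    (hwalk : ∀ m j : V, (((d : ℝ)⁻¹ • G.adjMatrix ℝ) ^ (2 * k)) m j
        ≤ C / Fintype.card V) :
    (⨆ v, |φ v|)
      ≤ ((d : ℝ) / ((d : ℝ) - ε)) ^ (2 * k)
          * (C / Real.sqrt (Fintype.card V)) * Real.sqrt (∑ v, φ v ^ 2) := by
  have hd : (0 : ℝ) < d := hε0.trans_lt hεd
  have hgap : (0 : ℝ) < d - ε := sub_pos.2 hεd
  set N := (d : ℝ)⁻¹ • G.adjMatrix ℝ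
  have hNφ : N *ᵥ φ = ((ε - d) / d) • φ := by
    rw [smul_mulVec, mulVec_eq_sub_smul_of_smul_one_add_mulVec_eq heig, smul_smul,
      div_eq_inv_mul]
  have hN_nonneg : ∀ i j, 0 ≤ N i j := fun i j => by
    simp only [N, Matrix.smul_apply, smul_eq_mul, SimpleGraph.adjMatrix_apply]
    positivity
  have hcoord : ∀ v, |(ε - d) / d| ^ (2 * k) * |φ v|
      ≤ C / √(Fintype.card V) * √(∑ w, φ w ^ 2) := fun v => by
    rw [← abs_pow, ← abs_mul, ← smul_eq_mul, ← Pi.smul_apply,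
      ← pow_mulVec_of_mulVec_eq_smul hNφ, ← div_mul_sqrt_eq_div_sqrt]
    refine abs_mulVec_apply_le_of_abs_le (by positivity) (fun j => ?_) φ
    exact (abs_of_nonneg (pow_apply_nonneg hN_nonneg _ v j)).trans_le (hwalk v j)
  have hratio : (d / (d - ε) : ℝ) * |(ε - d) / d| = 1 := by
    rw [abs_div, abs_sub_comm, abs_of_pos hgap, abs_of_pos hd]
    field_simp
  refine Real.iSup_le (fun v => ?_) (by positivity)
  calc |φ v| = (d / (d - ε)) ^ (2 * k) * (|(ε - d) / d| ^ (2 * k) * |φ v|) := by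
        rw [← mul_assoc, ← mul_pow, hratio, one_pow, one_mul]
    _ ≤ (d / (d - ε)) ^ (2 * k) * (C / √(Fintype.card V) * √(∑ w, φ w ^ 2)) :=
        mul_le_mul_of_nonneg_left (hcoord v) (by positivity)
    _ = _ := (mul_assoc _ _ _).symm

theorem sup_norm_bound_from_equidistributed_walk
    {V : Type*} [Fintype V] [DecidableEq V] [Nonempty V]
    (G : SimpleGraph V) [DecidableRel G.Adj] (d : ℕ)
    (hreg : G.IsRegularOfDegree d)
    (φ : V → ℝ) (ε : ℝ) (hε0 : 0 ≤ ε) (hεd : ε < d)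
    (heig : ((d : ℝ) • (1 : Matrix V V ℝ) + G.adjMatrix ℝ) *ᵥ φ = ε • φ)
    (k : ℕ) (C : ℝ) (hC : 0 < C)
    (hwalk : ∀ m j : V, (((d : ℝ)⁻¹ • G.adjMatrix ℝ) ^ (2 * k)) m j
        ≤ C / Fintype.card V) :
    (⨆ v, |φ v|)
      ≤ ((d : ℝ) / ((d : ℝ) - ε)) ^ (2 * k)
          * (C / Real.sqrt (Fintype.card V)) * Real.sqrt (∑ v, φ v ^ 2) :=
  sup_norm_bound_from_equidistributed_walk_general G d φ ε hε0 hεd heig k C hC hwalk
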